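/- Reduction to the double cover: for any undirected weighted graph G and any disjoint sets L, R ⊆ V with L ∪ R ≠ ∅, the conductance in the double cover H of the set L_1 ∪ R_2 equals the bipartiteness of (L, R) in G: Φ_H(L_1 ∪ R_2) = β_G(L, R). -/
import Mathlib


open Finset

/-- The volume of a vertex set: the sum of the degrees of its vertices. -/
noncomputable def gVol {V : Type*} (deg : V → ℝ) (S : Finset V) : ℝ := ∑ u ∈ S, deg u

/-- The total edge weight between two vertex sets. -/
noncomputable def gCut {V : Type*} (w : V → V → ℝ) (A B : Finset V) : ℝ :=
  ∑ u ∈ A, ∑ v ∈ B, w u v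

/-- The conductance of a vertex set. -/
noncomputable def gCond {V : Type*} [Fintype V] [DecidableEq V]
    (w : V → V → ℝ) (deg : V → ℝ) (S : Finset V) : ℝ :=
  gCut w S Sᶜ / min (gVol deg S) (gVol deg Sᶜ)

/-- The bipartiteness `β(L, R) = 1 - 2w(L,R)/vol(L ∪ R)` of a pair of disjoint sets. -/
noncomputable def gBip {V : Type*} [DecidableEq V]
    (w : V → V → ℝ) (deg : V → ℝ) (L R : Finset V) : ℝ :=
  1 - 2 * gCut w L R / gVol deg (L ∪ R)

/-- The edge weights of the double cover of a graph: the vertex `(v, false)` plays the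
role of `v₁` and `(v, true)` plays the role of `v₂`; every edge `{u, v}` of the original
graph gives rise to the edges `{u₁, v₂}` and `{u₂, v₁}` of the same weight. -/
noncomputable def dcWeight {V : Type*} (w : V → V → ℝ) : V × Bool → V × Bool → ℝ :=
  fun x y => if x.2 ≠ y.2 then w x.1 y.1 else 0

/-- **Reduction to the double cover** (Lemma 6.1): the conductance of `L₁ ∪ R₂` in the
double cover `H` of `G` equals the bipartiteness of `(L, R)` in `G`. -/
theorem double_cover_conductance_eq_bipartiteness
    {V : Type*} [Fintype V] [DecidableEq V]
    (w : V → V → ℝ)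
    (hsymm : ∀ u v, w u v = w v u)
    (hnonneg : ∀ u v, 0 ≤ w u v)
    (deg : V → ℝ) (hdeg : ∀ u, deg u = ∑ v, w u v)
    (hdegpos : ∀ u, 0 < deg u)
    -- the degrees in the double cover
    (degH : V × Bool → ℝ) (hdegH : ∀ x, degH x = ∑ y, dcWeight w x y)
    (L R : Finset V) (hLR : Disjoint L R) (hne : (L ∪ R).Nonempty) :
    gCond (dcWeight w) degH
        (L.image (fun v => (v, false)) ∪ R.image (fun v => (v, true))) =
      gBip w deg L R := by
  classical
  set S : Finset (V × Bool) :=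
    L.image (fun v => (v, false)) ∪ R.image (fun v => (v, true)) with hS
  have hinj1 : Function.Injective (fun v : V => (v, false)) := by
    intro a b h; simpa using h
  have hinj2 : Function.Injective (fun v : V => (v, true)) := by
    intro a b h; simpa using h
  have hSdisj : Disjoint (L.image (fun v => (v, false))) (R.image (fun v => (v, true))) := by
    rw [Finset.disjoint_left]
    rintro x hx hx'
    simp only [Finset.mem_image] at hx hx'
    obtain ⟨a, _, rfl⟩ := hx
    obtain ⟨b, _, h⟩ := hx'
    simpa using congrArg Prod.snd h
  have hdegH' : ∀ v b, degH (v, b) = deg v := by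
    intro v b
    rw [hdegH, Fintype.sum_prod_type, hdeg]
    refine Finset.sum_congr rfl fun u _ => ?_
    cases b <;> simp [dcWeight]
  -- volume of S
  have volS : gVol degH S = gVol deg (L ∪ R) := by
    rw [hS]
    unfold gVol
    rw [Finset.sum_union hSdisj, Finset.sum_image (fun a _ b _ h => hinj1 h),
      Finset.sum_image (fun a _ b _ h => hinj2 h), Finset.sum_union hLR]
    simp [hdegH']
  -- cut within S
  have cutSS : gCut (dcWeight w) S S = 2 * gCut w L R := by
    rw [hS]
    unfold gCut
    rw [Finset.sum_union hSdisj]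
    rw [Finset.sum_image (fun a _ b _ h => hinj1 h), Finset.sum_image (fun a _ b _ h => hinj2 h)]
    have e1 : ∀ u : V, ∑ y ∈ L.image (fun v => (v, false)) ∪ R.image (fun v => (v, true)),
        dcWeight w (u, false) y = ∑ v ∈ R, w u v := by
      intro u
      rw [Finset.sum_union hSdisj, Finset.sum_image (fun a _ b _ h => hinj1 h),
        Finset.sum_image (fun a _ b _ h => hinj2 h)]
      simp [dcWeight]
    have e2 : ∀ u : V, ∑ y ∈ L.image (fun v => (v, false)) ∪ R.image (fun v => (v, true)),
        dcWeight w (u, true) y = ∑ v ∈ L, w u v := by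
      intro u
      rw [Finset.sum_union hSdisj, Finset.sum_image (fun a _ b _ h => hinj1 h),
        Finset.sum_image (fun a _ b _ h => hinj2 h)]
      simp [dcWeight]
    rw [Finset.sum_congr rfl fun u _ => e1 u, Finset.sum_congr rfl fun u _ => e2 u]
    have : ∑ u ∈ R, ∑ v ∈ L, w u v = ∑ u ∈ L, ∑ v ∈ R, w u v := by
      rw [Finset.sum_comm]
      exact Finset.sum_congr rfl fun u _ => Finset.sum_congr rfl fun v _ => hsymm v u
    rw [this]; ring
  -- cut to complement
  have cutSc : gCut (dcWeight w) S Sᶜ = gVol deg (L ∪ R) - 2 * gCut w L R := by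
    have key : ∀ x ∈ S, ∑ y ∈ Sᶜ, dcWeight w x y = degH x - ∑ y ∈ S, dcWeight w x y := by
      intro x _
      have := Finset.sum_compl_add_sum S (dcWeight w x)
      rw [hdegH x]; linarith
    unfold gCut
    rw [Finset.sum_congr rfl key, Finset.sum_sub_distrib]
    have : (∑ x ∈ S, degH x) = gVol deg (L ∪ R) := volS
    rw [this]
    have : (∑ x ∈ S, ∑ y ∈ S, dcWeight w x y) = 2 * gCut w L R := cutSS
    rw [this]
    rfl
  -- volume of complement
  have hvolsub : gVol deg (L ∪ R) ≤ gVol deg Finset.univ := by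
    unfold gVol
    exact Finset.sum_le_sum_of_subset_of_nonneg (Finset.subset_univ _)
      (fun v _ _ => (hdegpos v).le)
  have volSc : gVol degH Sᶜ = 2 * gVol deg Finset.univ - gVol deg (L ∪ R) := by
    have htot : gVol degH (Finset.univ : Finset (V × Bool)) = 2 * gVol deg Finset.univ := by
      unfold gVol
      rw [Fintype.sum_prod_type]
      have : ∀ v : V, ∑ b : Bool, degH (v, b) = 2 * deg v := by
        intro v; simp [hdegH', two_mul]
      rw [Finset.sum_congr rfl fun v _ => this v, Finset.mul_sum]
    have := Finset.sum_compl_add_sum S degH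
    have hv : gVol degH Sᶜ + gVol degH S = gVol degH Finset.univ := this
    rw [volS, htot] at hv; linarith
  have volpos : 0 < gVol deg (L ∪ R) := by
    unfold gVol
    exact Finset.sum_pos (fun v _ => hdegpos v) hne
  have hmin : min (gVol degH S) (gVol degH Sᶜ) = gVol deg (L ∪ R) := by
    rw [volS, volSc]
    exact min_eq_left (by linarith)
  unfold gCond gBip
  rw [hmin, cutSc]
  field_simp
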